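/- The refinement relation `⊑` on conditions is transitive: for all conditions s₀, s₁, s₂ over Σ, if s₀ ⊑ s₁ and s₁ ⊑ s₂, then s₀ ⊑ s₂ (this is the key fact enabling incremental strengthening of specifications across chained conditional refinements). -/

import Mathlib

/-- Call depths: `none` is `∞` and `some o` is `⟨o⟩`. -/
abbrev Depth := Option Ordinal

/-- The strict order on call depths. -/
def depthLt (d₁ d₂ : Depth) : Prop :=
  ∃ o₁, d₁ = some o₁ ∧ (d₂ = none ∨ ∃ o₂, d₂ = some o₂ ∧ o₁ < o₂)

/-- The non-strict order on call depths. -/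
def depthLe (d₁ d₂ : Depth) : Prop :=
  d₁ = d₂ ∨ depthLt d₁ d₂

/-- The frame-preserving update modality on predicates over a PCM. -/
def upd {R : Type*} [AddCommMonoid R] (valid : R → Prop) (P : R → Prop) : R → Prop :=
  fun a => ∀ c, valid (a + c) → ∃ b, valid (b + c) ∧ P b

/-- Entailment between predicates over a PCM. -/
def entails {R : Type*} [AddCommMonoid R] (valid : R → Prop) (P Q : R → Prop) : Prop :=
  ∀ a, valid a → P a → Q a

/-- A condition `(W, D, P, Q)` over a PCM `R` with values in `V`. -/
structure Cond (R V : Type*) where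
  W : Type
  D : W → Depth.{u_3}
  P : W → V → V → R → Prop
  Q : W → V → V → R → Prop

/-- The refinement relation `⊑` on conditions. -/
def condRef {R V : Type*} [AddCommMonoid R] (valid : R → Prop)
    (s₀ s₁ : Cond R V) : Prop :=
  ∀ w₀ : s₀.W, ∃ w₁ : s₁.W,
    depthLe (s₁.D w₁) (s₀.D w₀) ∧
    (∀ x xa : V, entails valid (s₀.P w₀ x xa) (upd valid (s₁.P w₁ x xa))) ∧
    (∀ r ra : V, entails valid (s₁.Q w₁ r ra) (upd valid (s₀.Q w₀ r ra)))

theorem depthLe_trans {d₁ d₂ d₃ : Depth} (h₁₂ : depthLe d₁ d₂) (h₂₃ : depthLe d₂ d₃) :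
    depthLe d₁ d₃ := by
  rcases h₁₂ with rfl | ⟨o₁, rfl, h₁₂⟩
  · exact h₂₃
  rcases h₂₃ with rfl | ⟨o₂, rfl, h₂₃⟩
  · exact Or.inr ⟨o₁, rfl, h₁₂⟩
  obtain ⟨o₂', ho₂, ho₁₂⟩ := h₁₂.resolve_left (Option.some_ne_none o₂)
  cases Option.some.inj ho₂
  rcases h₂₃ with rfl | ⟨o₃, rfl, ho₂₃⟩
  · exact Or.inr ⟨o₁, rfl, Or.inl rfl⟩
  · exact Or.inr ⟨o₁, rfl, Or.inr ⟨o₃, rfl, ho₁₂.trans ho₂₃⟩⟩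

/-- The resource `b` produced by the first update for the frame `c` is valid because `b + c` is,
so the second update applies to it. -/
theorem entails_upd_trans {R : Type*} [AddCommMonoid R] {valid : R → Prop}
    (valid_add : ∀ a b : R, valid (a + b) → valid a) {P Q S : R → Prop}
    (hPQ : entails valid P (upd valid Q)) (hQS : entails valid Q (upd valid S)) :
    entails valid P (upd valid S) := by
  intro a ha hP c hc
  obtain ⟨b, hbc, hQ⟩ := hPQ a ha hP c hc
  exact hQS b (valid_add b c hbc) hQ c hbc

theorem condRef_trans_general {R V : Type*} [AddCommMonoid R]
    (valid : R → Prop)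
    (valid_add : ∀ a b : R, valid (a + b) → valid a)
    (s₀ s₁ s₂ : Cond R V)
    (h₀₁ : condRef valid s₀ s₁) (h₁₂ : condRef valid s₁ s₂) :
    condRef valid s₀ s₂ := by
  intro w₀
  obtain ⟨w₁, hD₁, hP₁, hQ₁⟩ := h₀₁ w₀
  obtain ⟨w₂, hD₂, hP₂, hQ₂⟩ := h₁₂ w₁
  exact ⟨w₂, depthLe_trans hD₂ hD₁,
    fun x xa => entails_upd_trans valid_add (hP₁ x xa) (hP₂ x xa),
    fun r ra => entails_upd_trans valid_add (hQ₂ r ra) (hQ₁ r ra)⟩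

/-- The refinement relation `⊑` on conditions is transitive. -/
theorem condRef_trans {R V : Type*} [AddCommMonoid R]
    (valid : R → Prop) (valid_zero : valid 0)
    (valid_add : ∀ a b : R, valid (a + b) → valid a)
    (s₀ s₁ s₂ : Cond R V)
    (h₀₁ : condRef valid s₀ s₁) (h₁₂ : condRef valid s₁ s₂) :
    condRef valid s₀ s₂ :=
  condRef_trans_general valid valid_add s₀ s₁ s₂ h₀₁ h₁₂
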